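/- Let κ be either ω or an uncountable cardinal carrying a κ-complete nonprincipal ultrafilter. Then every sub-binary Hausdorff tree of cardinality κ contains a chain of order type κ (a κ-branch). -/

import Mathlib

/-!
Let `U` be a nonprincipal `κ`-complete ultrafilter on `T` (for `κ = ω`, any nonprincipal one);
completeness makes it uniform, i.e. it contains no set of size `< κ`. The elements `x` whose cone
`Set.Ici x` is `U`-large form a downward closed chain `B`. If `#B < κ`, then by completeness `U`
concentrates on the upper bounds of `B` outside `B`. Each of them lies above some `c` with
`Set.Iio c = B`, and there are only finitely many such `c`: children of the maximum of `B`, or a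
single limit node by the Hausdorff condition. No cone above such a `c` is `U`-large, so a finite
intersection yields a contradiction. Hence `#B ≥ κ`, and an initial segment of `B` is the branch.
-/

open Cardinal

universe u

/-- `y` is a child (immediate successor) of `x` in the partial order `T`. -/
def IsChildOf {T : Type u} [PartialOrder T] (x y : T) : Prop :=
  x < y ∧ ∀ z, x < z → ¬ z < y

/-- `t` lies at a limit level: its set of strict predecessors is nonempty and
has no maximal element. -/
def AtLimitLevel {T : Type u} [PartialOrder T] (t : T) : Prop :=
  (Set.Iio t).Nonempty ∧ ∀ x < t, ∃ y, x < y ∧ y < t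

/-- `T` is a sub-binary Hausdorff set-theoretic tree: a partial order with a
least element (root) in which the set of strict predecessors of every element
is well-ordered (a well-founded chain), every element has at most two children,
and no two distinct elements at limit levels have the same set of strict
predecessors. -/
def IsSubBinaryHausdorffTree (T : Type u) [PartialOrder T] : Prop :=
  (∃ r : T, ∀ t, r ≤ t) ∧
  (∀ t : T, IsChain (· ≤ ·) (Set.Iio t)) ∧
  (∀ t : T, (Set.Iio t).WellFoundedOn (· < ·)) ∧
  (∀ t : T, #{u : T | IsChildOf t u} ≤ 2) ∧
  (∀ t₁ t₂ : T, AtLimitLevel t₁ → AtLimitLevel t₂ → Set.Iio t₁ = Set.Iio t₂ → t₁ = t₂)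

section Tree

variable {T : Type u} [PartialOrder T]

theorem isChain_Iic_of_isChain_Iio (hchain : ∀ t : T, IsChain (· ≤ ·) (Set.Iio t)) (t : T) :
    IsChain (· ≤ ·) (Set.Iic t) := by
  rw [← Set.Iio_insert]
  exact (hchain t).insert fun b hb _ => Or.inr (le_of_lt hb)

theorem wellFoundedLT_of_wellFoundedOn_Iio (hwf : ∀ t : T, (Set.Iio t).WellFoundedOn (· < ·)) :
    WellFoundedLT T := by
  refine ⟨⟨fun t => (Set.WellFoundedOn.acc_iff_wellFoundedOn.out 2 0).1 ?_⟩⟩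
  rw [Relation.transGen_eq_self]
  exact hwf t

theorem finite_setOf_Iio_eq (hchild : ∀ t : T, #{u : T | IsChildOf t u} ≤ 2)
    (hhaus : ∀ t₁ t₂ : T, AtLimitLevel t₁ → AtLimitLevel t₂ → Set.Iio t₁ = Set.Iio t₂ → t₁ = t₂)
    {B : Set T} (hB : B.Nonempty) : {c : T | Set.Iio c = B}.Finite := by
  by_cases hmax : ∃ m ∈ B, ∀ b ∈ B, ¬ m < b
  · obtain ⟨m, hmB, hm⟩ := hmax
    have hfin : #{u : T | IsChildOf m u} < ℵ₀ :=
      (hchild m).trans_lt (natCast_lt_aleph0 (n := 2))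
    refine (lt_aleph0_iff_set_finite.1 hfin).subset ?_
    rintro c (hc : Set.Iio c = B)
    subst hc
    exact ⟨hmB, fun z hmz hzc => hm z hzc hmz⟩
  · push Not at hmax
    refine Set.Subsingleton.finite fun c₁ (hc₁ : Set.Iio c₁ = B) c₂ (hc₂ : Set.Iio c₂ = B) => ?_
    have hlim : ∀ c : T, Set.Iio c = B → AtLimitLevel c := by
      rintro c rfl
      exact ⟨hB, fun x hx => let ⟨y, hyc, hxy⟩ := hmax x hx; ⟨y, hxy, hyc⟩⟩
    exact hhaus c₁ c₂ (hlim c₁ hc₁) (hlim c₂ hc₂) (hc₁.trans hc₂.symm)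

theorem exists_le_Iio_eq [WellFoundedLT T] (hchain : ∀ t : T, IsChain (· ≤ ·) (Set.Iio t))
    {B : Set T} (hB : IsLowerSet B) {t : T} (hub : ∀ b ∈ B, b ≤ t) (ht : t ∉ B) :
    ∃ c ≤ t, Set.Iio c = B := by
  obtain ⟨c, ⟨hct, hcB⟩, hmin⟩ :=
    wellFounded_lt.has_min {x | x ≤ t ∧ x ∉ B} ⟨t, le_rfl, ht⟩
  refine ⟨c, hct, Set.Subset.antisymm (fun y hyc => ?_) (fun b hb => ?_)⟩
  · by_contra hyB
    exact hmin y ⟨hyc.le.trans hct, hyB⟩ hyc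
  · refine ((isChain_Iic_of_isChain_Iio hchain t).total (hub b hb) hct).elim
      (fun hbc => hbc.lt_of_ne ?_) (fun hcb => (hcB (hB hcb hb)).elim)
    rintro rfl
    exact hcB hb

end Tree

section Completeness

variable {T : Type u} {κ : Cardinal.{u}} {U : Ultrafilter T}

theorem biInter_mem_of_mk_lt (hcomp : ∀ s : Set (Set T), #s < κ → (∀ A ∈ s, A ∈ U) → ⋂₀ s ∈ U)
    {S : Set T} (hS : #S < κ) {f : T → Set T} (hf : ∀ x ∈ S, f x ∈ U) : ⋂ x ∈ S, f x ∈ U := by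
  rw [← Set.sInter_image]
  refine hcomp _ (mk_image_le.trans_lt hS) ?_
  rintro _ ⟨x, hx, rfl⟩
  exact hf x hx

theorem notMem_of_mk_lt (hcomp : ∀ s : Set (Set T), #s < κ → (∀ A ∈ s, A ∈ U) → ⋂₀ s ∈ U)
    (hsingleton : ∀ a : T, ({a} : Set T) ∉ U) {A : Set T} (hA : #A < κ) : A ∉ U := by
  rw [← Ultrafilter.compl_mem_iff_notMem, ← Set.biUnion_of_singleton A, Set.compl_iUnion₂]
  exact biInter_mem_of_mk_lt hcomp hA fun a _ => U.compl_mem_iff_notMem.2 (hsingleton a)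

end Completeness

section Ultrafilter

variable {T : Type u} [PartialOrder T] {κ : Cardinal.{u}} {U : Ultrafilter T}

def ultrafilterBranch (U : Ultrafilter T) : Set T :=
  {x | Set.Ici x ∈ U}

theorem isLowerSet_ultrafilterBranch (U : Ultrafilter T) : IsLowerSet (ultrafilterBranch U) :=
  fun _ _ hba ha => Filter.mem_of_superset ha (Set.Ici_subset_Ici.2 hba)

theorem isChain_ultrafilterBranch (hchain : ∀ t : T, IsChain (· ≤ ·) (Set.Iio t))
    (U : Ultrafilter T) : IsChain (· ≤ ·) (ultrafilterBranch U) := by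
  intro x hx y hy _
  obtain ⟨t, hxt, hyt⟩ := U.nonempty_of_mem (Filter.inter_mem hx hy)
  exact (isChain_Iic_of_isChain_Iio hchain t).total hxt hyt

theorem mem_ultrafilterBranch_of_forall_le {r : T} (hr : ∀ t, r ≤ t) (U : Ultrafilter T) :
    r ∈ ultrafilterBranch U :=
  Filter.mem_of_superset Filter.univ_mem fun t _ => hr t

theorem le_mk_ultrafilterBranch (hT : IsSubBinaryHausdorffTree T)
    (hcomp : ∀ s : Set (Set T), #s < κ → (∀ A ∈ s, A ∈ U) → ⋂₀ s ∈ U)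
    (hsmall : ∀ A : Set T, #A < κ → A ∉ U) : κ ≤ #(ultrafilterBranch U) := by
  obtain ⟨⟨r, hr⟩, hchain, hwf, hchild, hhaus⟩ := hT
  have := wellFoundedLT_of_wellFoundedOn_Iio hwf
  set B := ultrafilterBranch U
  by_contra! hB
  have hfin : {c : T | Set.Iio c = B}.Finite :=
    finite_setOf_Iio_eq hchild hhaus ⟨r, mem_ultrafilterBranch_of_forall_le hr U⟩
  have hup : ⋂ b ∈ B, Set.Ici b ∈ U := biInter_mem_of_mk_lt hcomp hB fun _ hb => hb
  have hout : Bᶜ ∈ U := U.compl_mem_iff_notMem.2 (hsmall B hB)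
  have havoid : ⋂ c ∈ {c : T | Set.Iio c = B}, (Set.Ici c)ᶜ ∈ U := by
    refine (Filter.biInter_mem hfin).2 fun c (hc : Set.Iio c = B) => ?_
    refine U.compl_mem_iff_notMem.2 fun hcB => ?_
    exact lt_irrefl c (hc ▸ hcB : c ∈ Set.Iio c)
  obtain ⟨t, ⟨htup, htB⟩, htK⟩ :=
    U.nonempty_of_mem (Filter.inter_mem (Filter.inter_mem hup hout) havoid)
  obtain ⟨c, hct, hc⟩ := exists_le_Iio_eq hchain (isLowerSet_ultrafilterBranch U)
    (fun b hb => Set.mem_iInter₂.1 htup b hb) htB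
  exact Set.mem_iInter₂.1 htK c hc hct

end Ultrafilter

theorem exists_isLowerSet_orderIso_Iio_ord {T : Type u} [PartialOrder T] [WellFoundedLT T]
    {B : Set T} (hchain : IsChain (· ≤ ·) B) (hB : IsLowerSet B) {κ : Cardinal.{u}}
    (hκ : κ ≤ #B) :
    ∃ C : Set T, IsChain (· ≤ ·) C ∧ IsLowerSet C ∧ Nonempty (Set.Iio κ.ord ≃o C) := by
  classical
  let _ := hchain.linearOrder
  obtain ⟨f⟩ : Nonempty (κ.ord.ToType ≤i B) := by
    rw [← Ordinal.type_le_iff, Ordinal.type_toType, ord_le, Ordinal.card_type]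
    exact hκ
  let g : Set.Iio κ.ord ↪o T :=
    ((Ordinal.ToType.mk.toInitialSeg.trans f).toOrderEmbedding).trans (OrderEmbedding.subtype B)
  refine ⟨Set.range g, g.monotone.isChain_range, ?_, ⟨g.orderIso⟩⟩
  rintro _ y hy ⟨a, rfl⟩
  obtain ⟨b, hb⟩ := (Ordinal.ToType.mk.toInitialSeg.trans f).mem_range_of_le
    (show (⟨y, hB hy (f _).2⟩ : B) ≤ _ from hy)
  exact ⟨b, congrArg Subtype.val hb⟩

/-- Let `κ` be either `ω` or an uncountable cardinal carrying
a `κ`-complete nonprincipal ultrafilter.  Then every sub-binary Hausdorff tree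
of cardinality `κ` contains a `κ`-branch: a downward closed chain of order type
`κ`. -/
theorem subBinaryHausdorffTree_has_kappa_branch
    (κ : Cardinal.{u}) (T : Type u) [PartialOrder T]
    (hT : IsSubBinaryHausdorffTree T) (hcard : #T = κ)
    (hκ : κ = ℵ₀ ∨
      (ℵ₀ < κ ∧ ∃ U : Ultrafilter T,
        (∀ s : Set (Set T), #s < κ → (∀ A ∈ s, A ∈ U) → ⋂₀ s ∈ U) ∧
        (∀ A : Set T, A.Finite → A ∉ U))) :
    ∃ B : Set T, IsChain (· ≤ ·) B ∧ (∀ x ∈ B, ∀ y, y < x → y ∈ B) ∧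
      Nonempty (Set.Iio κ.ord ≃o B) := by
  obtain ⟨U, hcomp, hfin⟩ : ∃ U : Ultrafilter T,
      (∀ s : Set (Set T), #s < κ → (∀ A ∈ s, A ∈ U) → ⋂₀ s ∈ U) ∧
      ∀ A : Set T, A.Finite → A ∉ U := by
    rcases hκ with rfl | ⟨-, hU⟩
    · have : Infinite T := Cardinal.infinite_iff.2 hcard.ge
      exact ⟨Filter.hyperfilter T,
        fun s hs hsU => (Filter.sInter_mem (lt_aleph0_iff_set_finite.1 hs)).2 hsU,
        fun A hA => Filter.notMem_hyperfilter_of_finite hA⟩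
    · exact hU
  have hsmall : ∀ A : Set T, #A < κ → A ∉ U :=
    fun A => notMem_of_mk_lt hcomp fun a => hfin {a} (Set.finite_singleton a)
  have := wellFoundedLT_of_wellFoundedOn_Iio hT.2.2.1
  obtain ⟨C, hCchain, hClower, hiso⟩ := exists_isLowerSet_orderIso_Iio_ord
    (isChain_ultrafilterBranch hT.2.1 U) (isLowerSet_ultrafilterBranch U)
    (le_mk_ultrafilterBranch hT hcomp hsmall)
  exact ⟨C, hCchain, fun x hx y hyx => hClower hyx.le hx, hiso⟩
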